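/- If x̄ is a critical point of the n-dimensional Rosenbrock function P (for n ≥ 2, α > 0), then x̄_n = x̄_{n-1}², and the vector σ̄ with σ̄_i = α(x̄_i² − x̄_{i+1}) satisfies σ̄_{n-1} = 0 and, whenever σ̄_i + 1 ≠ 0, x̄_i = (σ̄_{i-1} + 2)/(2(σ̄_i + 1)) (with the convention σ̄_0 = 0). -/

import Mathlib

/-!
With σᵢ = α(xᵢ² − xᵢ₊₁), the partial derivative of P in xᵢ is 2(xᵢ − 1) + 2xᵢσᵢ − σᵢ₋₁ for
i < n and −σₙ₋₁ for i = n. At a critical point the last one gives σₙ₋₁ = 0, i.e. xₙ = xₙ₋₁² as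
α ≠ 0, and each of the others is linear in xᵢ with coefficient 2(σᵢ + 1).
-/

noncomputable def rosenbrock (m : ℕ) (α : ℝ) (x : Fin (m+1) → ℝ) : ℝ :=
  ∑ i : Fin m, ((x i.castSucc - 1)^2 + α/2 * (x i.succ - (x i.castSucc)^2)^2)

/-- The backward shift σ_{i-1}, with the convention σ_0 = 0. -/
noncomputable def spre (m : ℕ) (σ : Fin m → ℝ) (i : Fin m) : ℝ :=
  if h : 0 < (i : ℕ) then σ ⟨(i : ℕ) - 1, by have := i.isLt; omega⟩ else 0

open ContinuousLinearMap

theorem sum_mul_pi_single_apply_of_injective {ι κ R : Type*} [Fintype ι] [DecidableEq κ]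
    [Semiring R] {e : ι → κ} (he : e.Injective) (f : ι → R) (i₀ : ι) :
    ∑ i, f i * (Pi.single (e i₀) 1 : κ → R) (e i) = f i₀ := by
  classical
  simp [Pi.single_apply, he.eq_iff]

theorem sum_mul_pi_single_apply_of_forall_ne {ι κ R : Type*} [Fintype ι] [DecidableEq κ]
    [Semiring R] {e : ι → κ} {j : κ} (h : ∀ i, e i ≠ j) (f : ι → R) :
    ∑ i, f i * (Pi.single j 1 : κ → R) (e i) = 0 :=
  Finset.sum_eq_zero fun i _ => by rw [Pi.single_eq_of_ne (h i), mul_zero]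

theorem sum_mul_pi_single_castSucc_apply_succ {m : ℕ} (f : Fin m → ℝ) (i : Fin m) :
    ∑ k, f k * (Pi.single i.castSucc 1 : Fin (m+1) → ℝ) k.succ = spre m f i := by
  unfold spre
  split_ifs with hi
  · have : i.castSucc = (⟨i - 1, by omega⟩ : Fin m).succ :=
      Fin.ext (by simp only [Fin.val_castSucc, Fin.val_succ]; omega)
    rw [this, sum_mul_pi_single_apply_of_injective (Fin.succ_injective m)]
  · have : i.castSucc = 0 := Fin.ext (by simp only [Fin.val_castSucc, Fin.val_zero]; omega)
    rw [this, sum_mul_pi_single_apply_of_forall_ne Fin.succ_ne_zero]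

section Rosenbrock

variable {m : ℕ} (α : ℝ) (x : Fin (m+1) → ℝ)

noncomputable def rosenbrockSigma (i : Fin m) : ℝ := α * (x i.castSucc ^ 2 - x i.succ)

theorem hasFDerivAt_rosenbrock :
    HasFDerivAt (rosenbrock m α)
      (∑ i : Fin m,
        ((2 * (x i.castSucc - 1) + 2 * x i.castSucc * rosenbrockSigma α x i) •
            proj (R := ℝ) (φ := fun _ => ℝ) i.castSucc
          - rosenbrockSigma α x i • proj (R := ℝ) (φ := fun _ => ℝ) i.succ)) x := by
  refine HasFDerivAt.fun_sum fun i _ => ?_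
  have ha := (proj i.castSucc : (Fin (m+1) → ℝ) →L[ℝ] ℝ).hasFDerivAt (x := x)
  have hb := (proj i.succ : (Fin (m+1) → ℝ) →L[ℝ] ℝ).hasFDerivAt (x := x)
  refine (((ha.sub_const 1).pow 2).add
    (((hb.sub (ha.pow 2)).pow 2).const_mul (α/2))).congr_fderiv ?_
  ext v
  simp only [rosenbrockSigma, add_apply, sub_apply, smul_apply, proj_apply, Pi.sub_apply,
    smul_eq_mul, nsmul_eq_mul, Nat.cast_ofNat, Nat.add_one_sub_one, pow_one]
  ring

theorem fderiv_rosenbrock_apply_single (j : Fin (m+1)) :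
    fderiv ℝ (rosenbrock m α) x (Pi.single j 1) =
      ∑ i : Fin m, (2 * (x i.castSucc - 1) + 2 * x i.castSucc * rosenbrockSigma α x i) *
          (Pi.single j 1 : Fin (m+1) → ℝ) i.castSucc
        - ∑ i : Fin m, rosenbrockSigma α x i * (Pi.single j 1 : Fin (m+1) → ℝ) i.succ := by
  simp [(hasFDerivAt_rosenbrock α x).fderiv, Finset.sum_sub_distrib, mul_comm]

theorem fderiv_rosenbrock_apply_single_castSucc (i : Fin m) :
    fderiv ℝ (rosenbrock m α) x (Pi.single i.castSucc 1) =
      2 * (x i.castSucc - 1) + 2 * x i.castSucc * rosenbrockSigma α x i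
        - spre m (rosenbrockSigma α x) i := by
  rw [fderiv_rosenbrock_apply_single, sum_mul_pi_single_apply_of_injective
    (Fin.castSucc_injective m), sum_mul_pi_single_castSucc_apply_succ]

theorem fderiv_rosenbrock_apply_single_last {i : Fin m} (hi : i.succ = Fin.last m) :
    fderiv ℝ (rosenbrock m α) x (Pi.single (Fin.last m) 1) = -rosenbrockSigma α x i := by
  rw [fderiv_rosenbrock_apply_single, sum_mul_pi_single_apply_of_forall_ne
    Fin.castSucc_ne_last, ← hi, sum_mul_pi_single_apply_of_injective (Fin.succ_injective m),
    zero_sub]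

end Rosenbrock

theorem critical_point_analytic_form (m : ℕ) (hm : 1 ≤ m) (α : ℝ) (hα : 0 < α)
    (xbar : Fin (m+1) → ℝ) (hcrit : fderiv ℝ (rosenbrock m α) xbar = 0) :
    xbar (Fin.last m) = (xbar ⟨m - 1, by omega⟩)^2 ∧
    (fun i : Fin m => α * ((xbar i.castSucc)^2 - xbar i.succ)) ⟨m - 1, by omega⟩ = 0 ∧
    ∀ i : Fin m,
      α * ((xbar i.castSucc)^2 - xbar i.succ) + 1 ≠ 0 →
      xbar i.castSucc =
        (spre m (fun j => α * ((xbar j.castSucc)^2 - xbar j.succ)) i + 2) /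
          (2 * (α * ((xbar i.castSucc)^2 - xbar i.succ) + 1)) := by
  have hpartial (j : Fin (m+1)) : fderiv ℝ (rosenbrock m α) xbar (Pi.single j 1) = 0 := by
    rw [hcrit, zero_apply]
  set i₀ : Fin m := ⟨m - 1, by omega⟩
  have hi₀ : i₀.succ = Fin.last m :=
    Fin.ext (by simp only [Fin.val_succ, Fin.val_last, i₀]; omega)
  have hσ : rosenbrockSigma α xbar i₀ = 0 := by
    simpa using (fderiv_rosenbrock_apply_single_last α xbar hi₀).symm.trans (hpartial _)
  refine ⟨?_, hσ, fun i hi => ?_⟩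
  · rw [← hi₀]
    change _ = xbar i₀.castSucc ^ 2
    have := (mul_eq_zero.mp hσ).resolve_left hα.ne'
    linarith
  · have h := (fderiv_rosenbrock_apply_single_castSucc α xbar i).symm.trans (hpartial _)
    rw [eq_div_iff (mul_ne_zero two_ne_zero hi)]
    unfold rosenbrockSigma at h
    linear_combination h
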